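/- arXiv:1310.0904 — 2 statements merged into one kernel-verified Lean document; each statement's English description precedes it below -/
import Mathlib

section
/- (Dual Sylvester–Gallai) Given a finite set of lines in the real projective plane, not all passing through a common point, there exists a point lying on exactly two of the lines. -/
/-!
Dually, the lines of `L` are points of the projective plane, not all on one line, and we need a
line through exactly two of them. Over the infinite field `ℝ` some linear form `f` vanishes on
none of them, so they become a finite non-collinear set in the affine plane `f = 1`. There
Kelly's argument applies: take a point `P` and a line `AB` through two of the points, not
containing `P`, with `P` as close to `AB` as possible. If `AB` contained a third point, two of
the three would lie weakly on the same side of the foot of `P`; the nearer one is then closer to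
the line through `P` and the farther one than `P` is to `AB`. A nonzero `q` orthogonal to the
two points on the minimal line gives the required point `[q]`.
-/

open scoped LinearAlgebra.Projectivization RealInnerProductSpace

/-- A point of the real projective plane lies on a line (a point of the dual projective
plane, given by a nonzero linear form up to scalar) if the standard pairing of
representatives vanishes.  This is independent of the chosen representatives. -/
def OnLine (p ℓ : Projectivization ℝ (Fin 3 → ℝ)) : Prop :=
  ∑ i, p.rep i * ℓ.rep i = 0

theorem mem_line_iff_exists_eq_add_smul {k V : Type*} [Ring k] [AddCommGroup V] [Module k V]
    {A B C : V} : C ∈ line[k, A, B] ↔ ∃ r : k, C = A + r • (B - A) := by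
  rw [← sub_add_cancel C A, ← vadd_eq_add, vadd_left_mem_affineSpan_pair]
  simp only [vsub_eq_sub, vadd_eq_add, sub_add_cancel]
  exact exists_congr fun r => by rw [eq_comm, sub_eq_iff_eq_add']

theorem exists_notMem_line_of_not_collinear {k V P : Type*} [DivisionRing k] [AddCommGroup V]
    [Module k V] [AddTorsor V P] {s : Set P} (h : ¬Collinear k s) :
    ∃ A ∈ s, ∃ B ∈ s, A ≠ B ∧ ∃ C ∈ s, C ∉ line[k, A, B] := by
  contrapose! h
  rcases s.eq_empty_or_nonempty with rfl | ⟨A, hA⟩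
  · exact collinear_empty k P
  by_cases hB : ∃ B ∈ s, B ≠ A
  · obtain ⟨B, hB, hBA⟩ := hB
    have hline : Collinear k (line[k, A, B] : Set P) := by
      change Module.rank k (affineSpan k _).direction ≤ 1
      rw [direction_affineSpan]
      exact collinear_pair k A B
    exact hline.subset fun C hC => h A hA B hB hBA.symm C hC
  · push Not at hB
    exact (collinear_singleton k A).subset fun C hC => hB C hC

theorem LinearEquiv.collinear_of_image {k V W : Type*} [DivisionRing k] [AddCommGroup V]
    [Module k V] [AddCommGroup W] [Module k W] (e : V ≃ₗ[k] W) {s : Set V}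
    (h : Collinear k (e '' s)) : Collinear k s := by
  obtain ⟨p₀, v, hv⟩ := (collinear_iff_exists_forall_eq_smul_vadd _).mp h
  refine (collinear_iff_exists_forall_eq_smul_vadd s).mpr ⟨e.symm p₀, e.symm v, fun p hp => ?_⟩
  obtain ⟨r, hr⟩ := hv (e p) (Set.mem_image_of_mem e hp)
  exact ⟨r, by simpa using congrArg e.symm hr⟩

theorem LinearEquiv.map_mem_line_iff {k V W : Type*} [Ring k] [AddCommGroup V]
    [Module k V] [AddCommGroup W] [Module k W] (e : V ≃ₗ[k] W) {A B C : V} :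
    e C ∈ line[k, e A, e B] ↔ C ∈ line[k, A, B] := by
  simp only [mem_line_iff_exists_eq_add_smul, ← map_sub, ← map_smul, ← map_add, e.injective.eq_iff]

/-- `(x - y) ^ 2 ≤ y ^ 2` says that `x` lies between `0` and `2 * y`. Two of the three numbers have
a nonnegative product, since the three pairwise products multiply to a square. -/
theorem exists_ne_sub_sq_le_sq {a b c : ℝ} (hab : a ≠ b) (hac : a ≠ c) (hbc : b ≠ c) :
    ∃ x ∈ ({a, b, c} : Set ℝ), ∃ y ∈ ({a, b, c} : Set ℝ), x ≠ y ∧ (x - y) ^ 2 ≤ y ^ 2 := by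
  have of_pair : ∀ p ∈ ({a, b, c} : Set ℝ), ∀ q ∈ ({a, b, c} : Set ℝ), p ≠ q → 0 ≤ p * q →
      ∃ x ∈ ({a, b, c} : Set ℝ), ∃ y ∈ ({a, b, c} : Set ℝ), x ≠ y ∧ (x - y) ^ 2 ≤ y ^ 2 := by
    intro p hp q hq hpq hpq₀
    rcases le_total (p ^ 2) (q ^ 2) with h | h
    · exact ⟨p, hp, q, hq, hpq, by nlinarith⟩
    · exact ⟨q, hq, p, hp, hpq.symm, by nlinarith⟩
  have : 0 ≤ a * b ∨ 0 ≤ a * c ∨ 0 ≤ b * c := by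
    by_contra! h
    nlinarith [mul_pos_of_neg_of_neg h.1 h.2.1, sq_nonneg (a * b * c)]
  rcases this with h | h | h
  · exact of_pair a (by simp) b (by simp) hab h
  · exact of_pair a (by simp) c (by simp) hac h
  · exact of_pair b (by simp) c (by simp) hbc h

section Kelly

variable {E : Type*} [NormedAddCommGroup E] [InnerProductSpace ℝ E]

/-- Pythagoras: for `A ≠ B`, the squared distance from `P` to `line[ℝ, A, B]`. -/
noncomputable def lineDistSq (A B P : E) : ℝ :=
  ‖P - A‖ ^ 2 - ⟪P - A, B - A⟫ ^ 2 / ‖B - A‖ ^ 2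

theorem lineDistSq_eq_zero_of_mem {A B P : E} (hP : P ∈ line[ℝ, A, B]) :
    lineDistSq A B P = 0 := by
  obtain ⟨r, rfl⟩ := mem_line_iff_exists_eq_add_smul.mp hP
  rcases eq_or_ne (B - A) 0 with h | h
  · simp [lineDistSq, h]
  · have : ‖B - A‖ ≠ 0 := norm_ne_zero_iff.mpr h
    simp only [lineDistSq, add_sub_cancel_left, norm_smul, inner_smul_left,
      real_inner_self_eq_norm_sq, Real.norm_eq_abs, mul_pow, sq_abs, RCLike.conj_to_real]
    field_simp
    ring

theorem inner_smul_add_smul {d w : E} (hdw : ⟪d, w⟫ = 0) (x α y β : ℝ) :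
    ⟪x • d + α • w, y • d + β • w⟫ = x * y * ‖d‖ ^ 2 + α * β * ‖w‖ ^ 2 := by
  simp only [inner_add_left, inner_add_right, inner_smul_left, inner_smul_right,
    real_inner_self_eq_norm_sq, real_inner_comm d w, hdw, RCLike.conj_to_real]
  ring

theorem lineDistSq_add_smul_add {Q d w : E} (hdw : ⟪d, w⟫ = 0) (hd : d ≠ 0) {a b : ℝ}
    (hab : a ≠ b) : lineDistSq (Q + a • d) (Q + b • d) (Q + w) = ‖w‖ ^ 2 := by
  have hP : Q + w - (Q + a • d) = (-a) • d + (1 : ℝ) • w := by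
    simp only [neg_smul, one_smul]; abel
  have hB : Q + b • d - (Q + a • d) = (b - a) • d + (0 : ℝ) • w := by
    simp only [sub_smul, zero_smul]; abel
  have hd' : ‖d‖ ≠ 0 := norm_ne_zero_iff.mpr hd
  have hab' : b - a ≠ 0 := sub_ne_zero.mpr hab.symm
  rw [lineDistSq, hP, hB, ← real_inner_self_eq_norm_sq,
    ← real_inner_self_eq_norm_sq ((b - a) • d + _), inner_smul_add_smul hdw,
    inner_smul_add_smul hdw, inner_smul_add_smul hdw]
  field_simp
  ring

theorem lineDistSq_add_add_smul {Q d w : E} (hdw : ⟪d, w⟫ = 0) (hw : w ≠ 0) (x y : ℝ) :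
    lineDistSq (Q + w) (Q + y • d) (Q + x • d) =
      ‖d‖ ^ 2 * ‖w‖ ^ 2 * (x - y) ^ 2 / (y ^ 2 * ‖d‖ ^ 2 + ‖w‖ ^ 2) := by
  have hX : ∀ z : ℝ, Q + z • d - (Q + w) = z • d + (-1 : ℝ) • w := fun z => by
    simp only [neg_smul, one_smul]; abel
  have : 0 < y ^ 2 * ‖d‖ ^ 2 + ‖w‖ ^ 2 := by positivity
  rw [lineDistSq, hX, hX, ← real_inner_self_eq_norm_sq,
    ← real_inner_self_eq_norm_sq (y • d + _), inner_smul_add_smul hdw,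
    inner_smul_add_smul hdw, inner_smul_add_smul hdw]
  field_simp
  ring

theorem exists_foot_of_notMem_line {A B P : E} (hP : P ∉ line[ℝ, A, B]) :
    ∃ Q w, w ≠ 0 ∧ ⟪B - A, w⟫ = 0 ∧ P = Q + w ∧
      ∀ C ∈ line[ℝ, A, B], ∃ r : ℝ, C = Q + r • (B - A) := by
  set s := ⟪B - A, P - A⟫ / ‖B - A‖ ^ 2
  refine ⟨A + s • (B - A), P - (A + s • (B - A)), ?_, ?_, by abel, fun C hC => ?_⟩
  · rw [sub_ne_zero]
    exact fun h => hP (mem_line_iff_exists_eq_add_smul.mpr ⟨s, h⟩)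
  · rcases eq_or_ne (B - A) 0 with h | h
    · simp [h]
    · have : ‖B - A‖ ≠ 0 := norm_ne_zero_iff.mpr h
      rw [sub_add_eq_sub_sub, inner_sub_right, inner_smul_right, real_inner_self_eq_norm_sq,
        div_mul_cancel₀ _ (pow_ne_zero 2 this), sub_self]
  · obtain ⟨t, rfl⟩ := mem_line_iff_exists_eq_add_smul.mp hC
    exact ⟨t - s, by rw [sub_smul]; abel⟩

theorem exists_lineDistSq_lt {A B C P : E} (hAB : A ≠ B) (hP : P ∉ line[ℝ, A, B])
    (hC : C ∈ line[ℝ, A, B]) (hCA : C ≠ A) (hCB : C ≠ B) :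
    ∃ X ∈ ({A, B, C} : Set E), ∃ Y ∈ ({A, B, C} : Set E),
      P ≠ Y ∧ X ∉ line[ℝ, P, Y] ∧ lineDistSq P Y X < lineDistSq A B P := by
  obtain ⟨Q, w, hw, hdw, rfl, hline⟩ := exists_foot_of_notMem_line hP
  set d := B - A
  have hd : d ≠ 0 := sub_ne_zero.mpr hAB.symm
  obtain ⟨a, ha⟩ := hline A (left_mem_affineSpan_pair ..)
  obtain ⟨b, hb⟩ := hline B (right_mem_affineSpan_pair ..)
  obtain ⟨c, hc⟩ := hline C hC
  have hab : a ≠ b := by rintro rfl; exact hAB (ha.trans hb.symm)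
  have hac : a ≠ c := by rintro rfl; exact hCA (hc.trans ha.symm)
  have hbc : b ≠ c := by rintro rfl; exact hCB (hc.trans hb.symm)
  obtain ⟨x, hx, y, hy, hxy, hle⟩ := exists_ne_sub_sq_le_sq hab hac hbc
  have hpts : ∀ z ∈ ({a, b, c} : Set ℝ), Q + z • d ∈ ({A, B, C} : Set E) := by
    rintro z (rfl | rfl | rfl) <;> simp [ha, hb, hc]
  have hD : 0 < ‖d‖ ^ 2 := by positivity
  have hW : 0 < ‖w‖ ^ 2 := by positivity
  have hpos : 0 < lineDistSq (Q + w) (Q + y • d) (Q + x • d) := by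
    have : x - y ≠ 0 := sub_ne_zero.mpr hxy
    rw [lineDistSq_add_add_smul hdw hw]
    positivity
  refine ⟨Q + x • d, hpts x hx, Q + y • d, hpts y hy, fun h => hw ?_,
    fun h => hpos.ne' (lineDistSq_eq_zero_of_mem h), ?_⟩
  · have hwd : w = y • d := add_left_cancel h
    rw [hwd, inner_smul_right, real_inner_self_eq_norm_sq, mul_eq_zero] at hdw
    rw [hwd, hdw.resolve_right hD.ne', zero_smul]
  · rw [lineDistSq_add_add_smul hdw hw, ha, hb, lineDistSq_add_smul_add hdw hd hab,
      div_lt_iff₀ (by positivity)]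
    nlinarith [mul_le_mul_of_nonneg_left hle (mul_pos hD hW).le, mul_pos hW hW]

theorem sylvester_gallai {S : Finset E} (hS : ¬Collinear ℝ (S : Set E)) :
    ∃ A ∈ S, ∃ B ∈ S, A ≠ B ∧ ∀ C ∈ S, C ∈ line[ℝ, A, B] → C = A ∨ C = B := by
  classical
  set T := (S ×ˢ S ×ˢ S).filter fun t : E × E × E => t.2.1 ≠ t.2.2 ∧ t.1 ∉ line[ℝ, t.2.1, t.2.2]
  obtain ⟨A, hA, B, hB, hAB, P, hP, hPAB⟩ := exists_notMem_line_of_not_collinear hS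
  obtain ⟨⟨P, A, B⟩, hmem, hmin⟩ := T.exists_min_image (fun t => lineDistSq t.2.1 t.2.2 t.1)
    ⟨(P, A, B), by simp_all [T]⟩
  simp only [T, Finset.mem_filter, Finset.mem_product] at hmem
  obtain ⟨⟨hP, hA, hB⟩, hAB, hPAB⟩ := hmem
  refine ⟨A, hA, B, hB, hAB, fun C hC hCAB => ?_⟩
  by_contra! hne
  obtain ⟨X, hX, Y, hY, hPY, hXPY, hlt⟩ := exists_lineDistSq_lt hAB hPAB hCAB hne.1 hne.2
  have hsub : ∀ Z ∈ ({A, B, C} : Set E), Z ∈ S := by rintro Z (rfl | rfl | rfl) <;> assumption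
  exact (hmin (X, P, Y) (by simp [T, hsub X hX, hsub Y hY, hP, hPY, hXPY])).not_gt hlt

end Kelly

theorem sylvester_gallai_of_finiteDimensional {V : Type*} [AddCommGroup V] [Module ℝ V]
    [FiniteDimensional ℝ V] {S : Finset V} (hS : ¬Collinear ℝ (S : Set V)) :
    ∃ A ∈ S, ∃ B ∈ S, A ≠ B ∧ ∀ C ∈ S, C ∈ line[ℝ, A, B] → C = A ∨ C = B := by
  classical
  let e := LinearEquiv.ofFinrankEq V (EuclideanSpace ℝ (Fin (Module.finrank ℝ V)))
    finrank_euclideanSpace_fin.symm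
  obtain ⟨_, heA, _, heB, hAB, hord⟩ := sylvester_gallai (S := S.image e)
    (by rw [Finset.coe_image]; exact mt e.collinear_of_image hS)
  obtain ⟨A, hA, rfl⟩ := Finset.mem_image.mp heA
  obtain ⟨B, hB, rfl⟩ := Finset.mem_image.mp heB
  refine ⟨A, hA, B, hB, ne_of_apply_ne e hAB, fun C hC hCAB => ?_⟩
  exact (hord (e C) (Finset.mem_image_of_mem e hC) (e.map_mem_line_iff.mpr hCAB)).imp
    (fun h => e.injective h) (fun h => e.injective h)

section DotProduct

variable {K : Type*} [Field K]

theorem exists_ne_zero_dotProduct_eq_zero₂ (u v : Fin 3 → K) :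
    ∃ q ≠ 0, q ⬝ᵥ u = 0 ∧ q ⬝ᵥ v = 0 := by
  obtain ⟨q, hq, h⟩ := Matrix.exists_mulVec_eq_zero_iff.mpr
    (Matrix.det_eq_zero_of_row_eq_zero (A := Matrix.of ![u, v, 0]) 2 fun _ => rfl)
  exact ⟨q, hq, by simpa [dotProduct_comm] using congrFun h 0,
    by simpa [dotProduct_comm] using congrFun h 1⟩

theorem Collinear.exists_ne_zero_forall_dotProduct_eq_zero {s : Set (Fin 3 → K)}
    (h : Collinear K s) : ∃ q ≠ 0, ∀ v ∈ s, q ⬝ᵥ v = 0 := by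
  obtain ⟨p₀, v, hv⟩ := (collinear_iff_exists_forall_eq_smul_vadd s).mp h
  obtain ⟨q, hq, hq₀, hqv⟩ := exists_ne_zero_dotProduct_eq_zero₂ p₀ v
  refine ⟨q, hq, fun p hp => ?_⟩
  obtain ⟨r, rfl⟩ := hv p hp
  simp [dotProduct_add, dotProduct_smul, hq₀, hqv]

theorem mem_line_of_dotProduct_eq_zero {f : Module.Dual K (Fin 3 → K)} {q A B C : Fin 3 → K}
    (hq : q ≠ 0) (hqA : q ⬝ᵥ A = 0) (hqB : q ⬝ᵥ B = 0) (hqC : q ⬝ᵥ C = 0)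
    (hA : f A = 1) (hB : f B = 1) (hC : f C = 1) (hAB : A ≠ B) : C ∈ line[K, A, B] := by
  have hdet : (Matrix.of ![A, B, C]).det = 0 := Matrix.exists_mulVec_eq_zero_iff.mp
    ⟨q, hq, by ext i; fin_cases i <;> simp [Matrix.mulVec, dotProduct_comm _ q, hqA, hqB, hqC]⟩
  obtain ⟨c, hc, hcomb⟩ := Matrix.exists_vecMul_eq_zero_iff.mpr hdet
  have hsum : c 0 • A + c 1 • B + c 2 • C = 0 := by
    rw [← hcomb]; ext j; simp [Matrix.vecMul, dotProduct, Fin.sum_univ_three]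
  have hf : c 0 + c 1 + c 2 = 0 := by simpa [hA, hB, hC] using congrArg f hsum
  have h2 : c 2 ≠ 0 := by
    intro h2
    have h1 : c 1 • (B - A) = 0 := by
      linear_combination (norm := module) hsum - hf • A + h2 • (A - C)
    have h1 : c 1 = 0 := (smul_eq_zero.mp h1).resolve_right (sub_ne_zero.mpr hAB.symm)
    have h0 : c 0 = 0 := by linear_combination hf - h1 - h2
    exact hc (funext fun i => by fin_cases i <;> simp [h0, h1, h2])
  refine mem_line_iff_exists_eq_add_smul.mpr ⟨-c 1 / c 2, smul_right_injective _ h2 ?_⟩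
  simp only [smul_add, smul_smul, mul_div_cancel₀ _ h2]
  linear_combination (norm := module) hsum - hf • A

theorem dotProduct_eq_zero_iff_mem_line {f : Module.Dual K (Fin 3 → K)} {q A B C : Fin 3 → K}
    (hq : q ≠ 0) (hqA : q ⬝ᵥ A = 0) (hqB : q ⬝ᵥ B = 0) (hA : f A = 1) (hB : f B = 1)
    (hC : f C = 1) (hAB : A ≠ B) : q ⬝ᵥ C = 0 ↔ C ∈ line[K, A, B] := by
  refine ⟨fun hqC => mem_line_of_dotProduct_eq_zero hq hqA hqB hqC hA hB hC hAB, fun hC => ?_⟩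
  obtain ⟨r, rfl⟩ := mem_line_iff_exists_eq_add_smul.mp hC
  simp [dotProduct_add, dotProduct_smul, dotProduct_sub, hqA, hqB]

end DotProduct

namespace Projectivization

variable {K V : Type*} [Field K] [AddCommGroup V] [Module K V]

theorem exists_dual_forall_apply_rep_ne_zero [Infinite K] (L : Finset (ℙ K V)) :
    ∃ f : Module.Dual K V, ∀ ℓ ∈ L, f ℓ.rep ≠ 0 := by
  have hker : ∀ ℓ : ℙ K V, LinearMap.ker (Module.Dual.eval K V ℓ.rep) ≠ ⊤ := fun ℓ h =>
    ℓ.rep_nonzero ((Module.forall_dual_apply_eq_zero_iff K _).mp fun f =>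
      LinearMap.mem_ker.mp (h ▸ Submodule.mem_top : f ∈ _))
  obtain ⟨f, -, hf⟩ := Set.exists_of_ssubset
    (Submodule.iUnion_ssubset_of_forall_ne_top_of_card_lt L _ hker (by simp))
  simp only [Set.mem_iUnion, SetLike.mem_coe, LinearMap.mem_ker, not_exists] at hf
  exact ⟨f, hf⟩

/-- The representative of `ℓ` on the affine hyperplane `f = 1` (junk `0` when `f ℓ.rep = 0`). -/
noncomputable def affineRep (f : Module.Dual K V) (ℓ : ℙ K V) : V :=
  (f ℓ.rep)⁻¹ • ℓ.rep

variable {f : Module.Dual K V} {ℓ : ℙ K V}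

theorem apply_affineRep (h : f ℓ.rep ≠ 0) : f (affineRep f ℓ) = 1 := by
  simp [affineRep, h]

theorem affineRep_ne_zero (h : f ℓ.rep ≠ 0) : affineRep f ℓ ≠ 0 :=
  ne_of_apply_ne f (by simp [apply_affineRep h])

theorem mk_affineRep (h : f ℓ.rep ≠ 0) : mk K (affineRep f ℓ) (affineRep_ne_zero h) = ℓ := by
  conv_rhs => rw [← mk_rep ℓ]
  exact (mk_eq_mk_iff' K _ _ _ _).mpr ⟨(f ℓ.rep)⁻¹, rfl⟩

theorem affineRep_injOn : Set.InjOn (affineRep f) {ℓ : ℙ K V | f ℓ.rep ≠ 0} := by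
  intro ℓ hℓ ℓ' hℓ' h
  rw [← mk_affineRep hℓ, ← mk_affineRep hℓ']
  simp only [h]

end Projectivization

open Projectivization

theorem onLine_mk_iff {v w : Fin 3 → ℝ} (hv : v ≠ 0) (hw : w ≠ 0) :
    OnLine (mk ℝ v hv) (mk ℝ w hw) ↔ v ⬝ᵥ w = 0 := by
  obtain ⟨a, ha⟩ := exists_smul_eq_mk_rep ℝ v hv
  obtain ⟨b, hb⟩ := exists_smul_eq_mk_rep ℝ w hw
  change (mk ℝ v hv).rep ⬝ᵥ (mk ℝ w hw).rep = 0 ↔ _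
  simp [← ha, ← hb, Units.smul_def]

theorem onLine_mk_iff_dotProduct_affineRep {f : Module.Dual ℝ (Fin 3 → ℝ)} {q : Fin 3 → ℝ}
    (hq : q ≠ 0) {ℓ : ℙ ℝ (Fin 3 → ℝ)} (hℓ : f ℓ.rep ≠ 0) :
    OnLine (mk ℝ q hq) ℓ ↔ q ⬝ᵥ affineRep f ℓ = 0 := by
  conv_lhs => rw [← mk_affineRep hℓ]
  exact onLine_mk_iff hq _

theorem not_collinear_image_affineRep {L : Finset (ℙ ℝ (Fin 3 → ℝ))}
    {f : Module.Dual ℝ (Fin 3 → ℝ)} (hf : ∀ ℓ ∈ L, f ℓ.rep ≠ 0)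
    (h : ¬∃ p, ∀ ℓ ∈ L, OnLine p ℓ) : ¬Collinear ℝ (affineRep f '' L) := fun hcol => by
  obtain ⟨q, hq, hqL⟩ := hcol.exists_ne_zero_forall_dotProduct_eq_zero
  exact h ⟨mk ℝ q hq, fun ℓ hℓ => (onLine_mk_iff_dotProduct_affineRep hq (hf ℓ hℓ)).mpr
    (hqL _ (Set.mem_image_of_mem _ hℓ))⟩

/-- **Dual Sylvester–Gallai.** Given a finite set of lines in the real projective plane,
not all passing through a common point, there exists a point lying on exactly two
of the lines. -/
theorem dual_sylvester_gallai (L : Finset (Projectivization ℝ (Fin 3 → ℝ)))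
    (h : ¬ ∃ p : Projectivization ℝ (Fin 3 → ℝ), ∀ ℓ ∈ L, OnLine p ℓ) :
    ∃ p : Projectivization ℝ (Fin 3 → ℝ),
      {ℓ ∈ (L : Set (Projectivization ℝ (Fin 3 → ℝ))) | OnLine p ℓ}.ncard = 2 := by
  classical
  obtain ⟨f, hf⟩ := exists_dual_forall_apply_rep_ne_zero L
  obtain ⟨_, hA, _, hB, hAB, hord⟩ := sylvester_gallai_of_finiteDimensional
    (S := L.image (affineRep f)) (by rw [Finset.coe_image]; exact not_collinear_image_affineRep hf h)
  obtain ⟨ℓ₁, hℓ₁, rfl⟩ := Finset.mem_image.mp hA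
  obtain ⟨ℓ₂, hℓ₂, rfl⟩ := Finset.mem_image.mp hB
  obtain ⟨q, hq, hq₁, hq₂⟩ := exists_ne_zero_dotProduct_eq_zero₂ (affineRep f ℓ₁) (affineRep f ℓ₂)
  have hon : ∀ ℓ ∈ L, OnLine (mk ℝ q hq) ℓ ↔
      affineRep f ℓ ∈ line[ℝ, affineRep f ℓ₁, affineRep f ℓ₂] := fun ℓ hℓ =>
    (onLine_mk_iff_dotProduct_affineRep hq (hf ℓ hℓ)).trans
      (dotProduct_eq_zero_iff_mem_line hq hq₁ hq₂ (apply_affineRep (hf ℓ₁ hℓ₁))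
        (apply_affineRep (hf ℓ₂ hℓ₂)) (apply_affineRep (hf ℓ hℓ)) hAB)
  refine ⟨mk ℝ q hq, ?_⟩
  suffices {ℓ ∈ (L : Set _) | OnLine (mk ℝ q hq) ℓ} = {ℓ₁, ℓ₂} by
    rw [this, Set.ncard_pair (ne_of_apply_ne _ hAB)]
  ext ℓ
  simp only [Finset.mem_coe, Set.mem_insert_iff, Set.mem_singleton_iff]
  constructor
  · rintro ⟨hℓ, hℓq⟩
    exact (hord _ (Finset.mem_image_of_mem _ hℓ) ((hon ℓ hℓ).mp hℓq)).imp
      (affineRep_injOn (hf ℓ hℓ) (hf ℓ₁ hℓ₁)) (affineRep_injOn (hf ℓ hℓ) (hf ℓ₂ hℓ₂))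
  · rintro (rfl | rfl)
    exacts [⟨hℓ₁, (hon _ hℓ₁).mpr (left_mem_affineSpan_pair ..)⟩,
      ⟨hℓ₂, (hon _ hℓ₂).mpr (right_mem_affineSpan_pair ..)⟩]
end

section
/- For even n ≥ 6, the Füredi–Palásti configuration L_n of n real lines L_i = L_{i, n/2 - 2i}, i = 0,...,n-1 (indices mod n), has exactly 1 + ⌊n(n-3)/6⌋ triple points, i.e., points where exactly three of the configuration lines meet. -/
/-!
Identify `ℝ²` with `ℂ` and write `ω x = exp (2πi x / n)` for `x : ZMod n`.
Since `ω (n/2) = -1`, the chord equation `z + ω_m ω_k z̄ = ω_m + ω_k` turns `L_x` into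
`{z | ω x ^ 2 * z - ω x * z̄ = ω x ^ 3 - 1}`. Two distinct lines `L_a`, `L_b` meet only at
`ω a + ω b + ω (-(a + b))`, and a third line `L_u` passes through that point iff `u = -(a + b)`.
So the triple points are the sums `ω a + ω b + ω c` over the 3-subsets `{a, b, c}` of `ZMod n`
with `a + b + c = 0`, and distinct subsets give distinct points. Counting ordered pairs `(a, b)`
with `a`, `b`, `-(a + b)` distinct gives `6 T = n² - 3n + 2t`, where `t` is the number of
solutions of `3x = 0`; as `1 ≤ t ≤ 3`, this forces `T = 1 + ⌊n(n-3)/6⌋`.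
-/

noncomputable section

/-- The point `P_m = ξ^m` on the unit circle, `ξ = exp(2πi/n)`, identifying `ℝ²` with `ℂ`. -/
def pt (n : ℕ) (m : ℤ) : ℂ := Complex.exp (2 * Real.pi * Complex.I * m / n)

/-- Direction of the line `L_{m,k}` (tangent direction at `P_m` when `P_m = P_k`). -/
def dirL (n : ℕ) (m k : ℤ) : ℂ :=
  if pt n m = pt n k then Complex.I * pt n m else pt n k - pt n m

/-- The real line `L_{m,k}` through `P_m` and `P_k` (tangent to the unit circle at `P_m` when
`P_m = P_k`), as a subset of `ℂ ≅ ℝ²`. -/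
def lineL (n : ℕ) (m k : ℤ) : Set ℂ :=
  {z | ∃ t : ℝ, z = pt n m + (t : ℂ) * dirL n m k}

/-- The `i`-th line `L_i = L_{i, n/2 - 2i}` of the Füredi–Palásti configuration. -/
def FPline (n : ℕ) (i : ℤ) : Set ℂ := lineL n i ((n : ℤ) / 2 - 2 * i)

open Finset ComplexConjugate ZMod

lemma exists_real_eq_add_mul_iff {p d z : ℂ} (hd : d ≠ 0) :
    (∃ t : ℝ, z = p + t * d) ↔ conj (z - p) * d = (z - p) * conj d := by
  have hd' : conj d ≠ 0 := (map_ne_zero _).2 hd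
  rw [← div_eq_div_iff hd' hd, ← map_div₀, Complex.conj_eq_iff_real]
  refine exists_congr fun t => ?_
  rw [div_eq_iff hd, sub_eq_iff_eq_add']

/-- The hypothesis on `d` holds for `d = b - a`, and for the tangent direction `d = I * a`. -/
lemma exists_real_eq_add_mul_iff_of_conj {a b : Circle} {d z : ℂ} (hd : d ≠ 0)
    (hconj : conj d = -d / (a * b)) :
    (∃ t : ℝ, z = a + t * d) ↔ z + a * b * conj z = a + b := by
  have ha : (a : ℂ) ≠ 0 := Circle.coe_ne_zero a
  have hb : (b : ℂ) ≠ 0 := Circle.coe_ne_zero b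
  have hca : conj (a : ℂ) = (a : ℂ)⁻¹ := by rw [← Circle.coe_inv_eq_conj, Circle.coe_inv]
  have key : conj (z - a) * d - (z - a) * conj d =
      d / (a * b) * (z + a * b * conj z - (a + b)) := by
    rw [hconj, map_sub, hca]; field_simp; ring
  rw [exists_real_eq_add_mul_iff hd, ← sub_eq_zero, key, mul_eq_zero, sub_eq_zero,
    or_iff_right (div_ne_zero hd (mul_ne_zero ha hb))]

lemma dirL_ne_zero (n : ℕ) (m k : ℤ) : dirL n m k ≠ 0 := by
  rw [dirL]
  split_ifs with h
  · exact mul_ne_zero Complex.I_ne_zero (Complex.exp_ne_zero _)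
  · exact sub_ne_zero.2 (Ne.symm h)

section FieldIdentities

variable {K : Type*} [Field K]

lemma eq_add_add_inv_of_sq_mul_sub_eq {a b z w : K} (ha : a ≠ 0) (hb : b ≠ 0) (hab : a ≠ b)
    (h₁ : a ^ 2 * z - a * w = a ^ 3 - 1) (h₂ : b ^ 2 * z - b * w = b ^ 3 - 1) :
    z = a + b + (a * b)⁻¹ := by
  have key : (a - b) * (a * b * z) = (a - b) * (a * b * (a + b) + 1) := by
    linear_combination b * h₁ - a * h₂
  field_simp
  linear_combination mul_left_cancel₀ (sub_ne_zero.2 hab) key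

lemma eq_or_eq_inv_of_add_inv_eq {a b u : K} (ha : a ≠ 0) (hb : b ≠ 0) (hu : u ≠ 0)
    (h : b + (a * b)⁻¹ = u + (a * u)⁻¹) : u = b ∨ u = (a * b)⁻¹ := by
  have : (u - b) * (a * b * u - 1) = 0 := by
    field_simp at h
    linear_combination -h
  rcases mul_eq_zero.1 this with h' | h'
  · exact Or.inl (sub_eq_zero.1 h')
  · right; field_simp; linear_combination h'

end FieldIdentities

lemma sq_mul_sub_conj_add_add_inv (a b : Circle) :
    (a : ℂ) ^ 2 * (a + b + (a * b)⁻¹) - a * conj ((a : ℂ) + b + (a * b)⁻¹) =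
      (a : ℂ) ^ 3 - 1 := by
  have ha := Circle.coe_ne_zero a
  have hb := Circle.coe_ne_zero b
  simp only [map_add, map_inv₀, Circle.coe_mul, map_mul, ← Circle.coe_inv_eq_conj,
    Circle.coe_inv]
  field_simp
  ring

section

variable {α : Type*} [Fintype α] [DecidableEq α]

lemma card_filter_snd_eq (f : α → α) : #{p : α × α | p.2 = f p.1} = Fintype.card α := by
  rw [card_filter, Fintype.sum_prod_type]; simp

lemma card_filter_fst_eq (f : α → α) : #{p : α × α | p.1 = f p.2} = Fintype.card α := by
  rw [card_filter, Fintype.sum_prod_type_right]; simp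

lemma card_filter_fst_eq_snd_and (P : α → Prop) [DecidablePred P] :
    #{p : α × α | p.1 = p.2 ∧ P p.1} = #{x | P x} := by
  rw [card_filter, card_filter, Fintype.sum_prod_type]; simp [ite_and]

end

lemma sum_triple {α M : Type*} [DecidableEq α] [AddCommMonoid M] (f : α → M) {a b c : α}
    (h : #{a, b, c} = 3) : ∑ x ∈ {a, b, c}, f x = f a + f b + f c := by
  obtain ⟨hab, hac, hbc⟩ := card_triple_eq_three_iff.1 h
  rw [sum_insert (by simp [hab, hac]), sum_pair hbc, add_assoc]

lemma eq_neg_add_self_iff {G : Type*} [AddCommGroup G] (x : G) : x = -(x + x) ↔ 3 • x = 0 := by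
  rw [eq_neg_iff_add_eq_zero, ← two_nsmul, ← succ_nsmul']

section ZeroSumTriples

variable {G : Type*} [AddCommGroup G] [Fintype G] [DecidableEq G]

variable (G) in
def zeroSumTriples : Finset (Finset G) :=
  {s ∈ univ.powersetCard 3 | ∑ x ∈ s, x = 0}

lemma mem_zeroSumTriples {s : Finset G} :
    s ∈ zeroSumTriples G ↔ #s = 3 ∧ ∑ x ∈ s, x = 0 := by
  simp [zeroSumTriples]

lemma eq_insert_insert_neg_add {s : Finset G} (hs : s ∈ zeroSumTriples G) {x y : G}
    (hx : x ∈ s) (hy : y ∈ s) (hxy : x ≠ y) : s = {x, y, -(x + y)} := by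
  rw [mem_zeroSumTriples] at hs
  have hy' : y ∈ s.erase x := mem_erase.2 ⟨hxy.symm, hy⟩
  obtain ⟨w, hw⟩ : ∃ w, (s.erase x).erase y = {w} :=
    card_eq_one.1 (by simp [card_erase_of_mem, hy', hx, hs.1])
  have hsum : x + y + w = 0 := by
    rw [← hs.2, ← add_sum_erase s (fun x => x) hx, ← add_sum_erase _ (fun x => x) hy', hw,
      sum_singleton, add_assoc]
  rw [← insert_erase hx, ← insert_erase hy', hw, eq_neg_of_add_eq_zero_right hsum]

lemma insert_insert_neg_add_mem_zeroSumTriples_iff {x y : G} :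
    {x, y, -(x + y)} ∈ zeroSumTriples G ↔ x ≠ y ∧ x ≠ -(x + y) ∧ y ≠ -(x + y) := by
  rw [mem_zeroSumTriples, ← card_triple_eq_three_iff, and_iff_left_iff_imp]
  intro h
  rw [sum_triple (fun x => x) h]
  abel

lemma card_filter_mem_zeroSumTriples :
    #{p : G × G | {p.1, p.2, -(p.1 + p.2)} ∈ zeroSumTriples G} = 6 * #(zeroSumTriples G) := by
  rw [card_eq_sum_card_fiberwise (f := fun p : G × G => {p.1, p.2, -(p.1 + p.2)})
    (s := {p : G × G | {p.1, p.2, -(p.1 + p.2)} ∈ zeroSumTriples G}) (t := zeroSumTriples G)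
    (fun p hp => (mem_filter.1 hp).2), mul_comm, sum_const_nat]
  intro s hs
  have hfiber : ({p ∈ {p : G × G | {p.1, p.2, -(p.1 + p.2)} ∈ zeroSumTriples G} |
      {p.1, p.2, -(p.1 + p.2)} = s} : Finset (G × G)) = s.offDiag := by
    ext ⟨x, y⟩
    simp only [mem_filter, mem_univ, true_and, mem_offDiag]
    constructor
    · rintro ⟨hmem, rfl⟩
      exact ⟨by simp, by simp, (insert_insert_neg_add_mem_zeroSumTriples_iff.1 hmem).1⟩
    · rintro ⟨hx, hy, hxy⟩
      rw [← eq_insert_insert_neg_add hs hx hy hxy]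
      exact ⟨hs, rfl⟩
  rw [hfiber, offDiag_card, (mem_zeroSumTriples.1 hs).1]

lemma card_filter_fst_eq_neg_add : #{p : G × G | p.1 = -(p.1 + p.2)} = Fintype.card G := by
  rw [← card_filter_snd_eq (fun x => -(x + x))]
  congr 1; ext ⟨x, y⟩
  simp only [mem_filter, mem_univ, true_and, eq_neg_iff_add_eq_zero]
  abel_nf

lemma card_filter_snd_eq_neg_add : #{p : G × G | p.2 = -(p.1 + p.2)} = Fintype.card G := by
  rw [← card_filter_fst_eq (fun y => -(y + y))]
  congr 1; ext ⟨x, y⟩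
  simp only [mem_filter, mem_univ, true_and, eq_neg_iff_add_eq_zero]
  abel_nf

lemma card_filter_notMem_zeroSumTriples :
    #{p : G × G | {p.1, p.2, -(p.1 + p.2)} ∉ zeroSumTriples G} + 2 * #{x : G | 3 • x = 0} =
      3 * Fintype.card G := by
  set E₁ : Finset (G × G) := {p | p.1 = p.2}
  set E₂ : Finset (G × G) := {p | p.1 = -(p.1 + p.2)}
  set E₃ : Finset (G × G) := {p | p.2 = -(p.1 + p.2)}
  set Δ : Finset (G × G) := {p | p.1 = p.2 ∧ 3 • p.1 = 0}
  have hunion : ({p : G × G | {p.1, p.2, -(p.1 + p.2)} ∉ zeroSumTriples G} : Finset (G × G)) =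
      E₁ ∪ (E₂ ∪ E₃) := by
    simp only [E₁, E₂, E₃, insert_insert_neg_add_mem_zeroSumTriples_iff, not_and_or, not_not,
      filter_or]
  have h₁ : #E₁ = Fintype.card G := card_filter_fst_eq id
  have h₂ : #E₂ = Fintype.card G := card_filter_fst_eq_neg_add
  have h₃ : #E₃ = Fintype.card G := card_filter_snd_eq_neg_add
  -- Any two of the three coincidences force `x = y` with `3 • x = 0`.
  have h₁₂₃ : E₁ ∩ (E₂ ∪ E₃) = Δ := by
    ext ⟨x, y⟩
    simp only [E₁, E₂, E₃, Δ, mem_inter, mem_union, mem_filter, mem_univ, true_and]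
    constructor
    · rintro ⟨rfl, h | h⟩ <;> exact ⟨rfl, (eq_neg_add_self_iff x).1 h⟩
    · rintro ⟨rfl, h⟩
      exact ⟨rfl, Or.inl ((eq_neg_add_self_iff x).2 h)⟩
  have h₂₃ : E₂ ∩ E₃ = Δ := by
    ext ⟨x, y⟩
    simp only [E₂, E₃, Δ, mem_inter, mem_filter, mem_univ, true_and]
    constructor
    · rintro ⟨hx, hy⟩
      obtain rfl : x = y := hx.trans hy.symm
      exact ⟨rfl, (eq_neg_add_self_iff x).1 hx⟩
    · rintro ⟨rfl, h⟩
      exact ⟨(eq_neg_add_self_iff x).2 h, (eq_neg_add_self_iff x).2 h⟩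
  have hI := card_union_add_card_inter E₁ (E₂ ∪ E₃)
  have hJ := card_union_add_card_inter E₂ E₃
  have hΔ : #Δ = #{x : G | 3 • x = 0} := card_filter_fst_eq_snd_and (fun x : G => 3 • x = 0)
  rw [h₁₂₃] at hI
  rw [h₂₃] at hJ
  rw [hunion]
  omega

theorem card_zeroSumTriples [IsAddCyclic G] (hG : 3 ≤ Fintype.card G) :
    #(zeroSumTriples G) = 1 + Fintype.card G * (Fintype.card G - 3) / 6 := by
  have hpairs := card_filter_add_card_filter_not (s := (univ : Finset (G × G)))
    (fun p => {p.1, p.2, -(p.1 + p.2)} ∈ zeroSumTriples G)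
  rw [card_univ, Fintype.card_prod, card_filter_mem_zeroSumTriples] at hpairs
  have hbad := card_filter_notMem_zeroSumTriples (G := G)
  have ht₁ : 1 ≤ #{x : G | 3 • x = 0} := card_pos.2 ⟨0, by simp⟩
  have ht₃ : #{x : G | 3 • x = 0} ≤ 3 := by
    convert IsAddCyclic.card_nsmul_eq_zero_le (α := G) three_pos
  -- `1 ≤ t ≤ 3` is all that is needed: `6 T = N (N - 3) + 2 t` then forces
  -- `T = 1 + ⌊N (N - 3) / 6⌋`.
  obtain ⟨A, hA⟩ : ∃ A, A = Fintype.card G * (Fintype.card G - 3) := ⟨_, rfl⟩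
  have hsq : Fintype.card G * Fintype.card G = A + 3 * Fintype.card G := by
    rw [hA, mul_comm 3, ← mul_add, Nat.sub_add_cancel hG]
  rw [← hA]
  omega

end ZeroSumTriples

def linesThrough (n : ℕ) (z : ℂ) : Set (ZMod n) := {x | z ∈ FPline n x.val}

lemma mem_linesThrough {n : ℕ} {x : ZMod n} {z : ℂ} :
    x ∈ linesThrough n z ↔ z ∈ FPline n x.val :=
  Iff.rfl

section

variable {n : ℕ} [NeZero n]

lemma pt_eq_toCircle (m : ℤ) : pt n m = toCircle (m : ZMod n) := by
  rw [pt, toCircle_intCast]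

lemma coe_toCircle_inj {a b : ZMod n} : (toCircle a : ℂ) = toCircle b ↔ a = b :=
  Circle.coe_injective.eq_iff.trans injective_toCircle.eq_iff

lemma coe_toCircle_neg_add (a b : ZMod n) :
    (toCircle (-(a + b)) : ℂ) = ((toCircle a : ℂ) * toCircle b)⁻¹ := by
  rw [AddChar.map_neg_eq_inv, AddChar.map_add_eq_mul, Circle.coe_inv, Circle.coe_mul]

lemma conj_dirL (m k : ℤ) : conj (dirL n m k) = -dirL n m k / (pt n m * pt n k) := by
  have hca (x : ZMod n) : conj (toCircle x : ℂ) = (toCircle x : ℂ)⁻¹ := by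
    rw [← Circle.coe_inv_eq_conj, Circle.coe_inv]
  have hm := Circle.coe_ne_zero (toCircle (m : ZMod n))
  have hk := Circle.coe_ne_zero (toCircle (k : ZMod n))
  rw [dirL, pt_eq_toCircle, pt_eq_toCircle]
  split_ifs with h
  · rw [map_mul, Complex.conj_I, hca, ← h]; field_simp
  · rw [map_sub, hca, hca]; field_simp; ring

lemma mem_lineL_iff (m k : ℤ) (z : ℂ) :
    z ∈ lineL n m k ↔ z + pt n m * pt n k * conj z = pt n m + pt n k := by
  have hconj := conj_dirL (n := n) m k
  rw [pt_eq_toCircle, pt_eq_toCircle] at hconj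
  rw [lineL, pt_eq_toCircle, pt_eq_toCircle]
  exact exists_real_eq_add_mul_iff_of_conj (dirL_ne_zero n m k) hconj

lemma toCircle_half (hne : Even n) : (toCircle (((n : ℤ) / 2 : ℤ) : ZMod n) : ℂ) = -1 := by
  obtain ⟨m, rfl⟩ := hne
  have hm : (m : ℂ) ≠ 0 := by have := NeZero.ne (m + m); norm_cast; omega
  rw [toCircle_intCast, show ((m + m : ℕ) : ℤ) / 2 = m by omega, ← Complex.exp_pi_mul_I]
  congr 1
  push_cast
  field_simp
  ring

lemma mem_FPline_iff (hne : Even n) (x : ZMod n) (z : ℂ) :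
    z ∈ FPline n x.val ↔
      (toCircle x : ℂ) ^ 2 * z - toCircle x * conj z = (toCircle x : ℂ) ^ 3 - 1 := by
  have hx : (toCircle x : ℂ) ≠ 0 := Circle.coe_ne_zero _
  have hval : (((x.val : ℕ) : ℤ) : ZMod n) = x := by simp
  rw [FPline, mem_lineL_iff, pt_eq_toCircle, pt_eq_toCircle, Int.cast_sub, Int.cast_mul, hval,
    AddChar.map_sub_eq_div, Circle.coe_div, toCircle_half hne, Int.cast_ofNat, two_mul,
    AddChar.map_add_eq_mul, Circle.coe_mul]
  constructor <;> intro h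
  · field_simp at h; linear_combination h
  · field_simp; linear_combination h

lemma ncard_setOf_lt_and (P : ℕ → Prop) :
    {i : ℕ | i < n ∧ P i}.ncard = {x : ZMod n | P x.val}.ncard := by
  rw [← Set.ncard_image_of_injective _ (ZMod.val_injective n)]
  congr 1
  ext i
  constructor
  · rintro ⟨hi, hP⟩
    exact ⟨i, by simpa [ZMod.val_cast_of_lt hi] using hP, ZMod.val_cast_of_lt hi⟩
  · rintro ⟨x, hx, rfl⟩
    exact ⟨ZMod.val_lt x, hx⟩

section

variable (hne : Even n)
include hne

lemma add_add_mem_FPline {a b c : ZMod n} (h : a + b + c = 0) :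
    (toCircle a + toCircle b + toCircle c : ℂ) ∈ FPline n a.val := by
  rw [eq_neg_of_add_eq_zero_right h, mem_FPline_iff hne, coe_toCircle_neg_add]
  exact_mod_cast sq_mul_sub_conj_add_add_inv (toCircle a) (toCircle b)

lemma eq_of_mem_FPline_of_mem_FPline {a b : ZMod n} {z : ℂ} (hab : a ≠ b)
    (ha : z ∈ FPline n a.val) (hb : z ∈ FPline n b.val) :
    z = toCircle a + toCircle b + toCircle (-(a + b)) := by
  rw [mem_FPline_iff hne] at ha hb
  rw [coe_toCircle_neg_add]
  exact eq_add_add_inv_of_sq_mul_sub_eq (Circle.coe_ne_zero _) (Circle.coe_ne_zero _)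
    (mt coe_toCircle_inj.1 hab) ha hb

lemma linesThrough_eq {a b : ZMod n} {z : ℂ} (hab : a ≠ b) (ha : a ∈ linesThrough n z)
    (hb : b ∈ linesThrough n z) : linesThrough n z = {a, b, -(a + b)} := by
  have hz := eq_of_mem_FPline_of_mem_FPline hne hab ha hb
  ext u
  simp only [Set.mem_insert_iff, Set.mem_singleton_iff]
  constructor
  · intro hu
    by_cases hua : u = a
    · exact Or.inl hua
    have hz' := eq_of_mem_FPline_of_mem_FPline hne (Ne.symm hua) ha hu
    rw [coe_toCircle_neg_add] at hz hz'
    rcases eq_or_eq_inv_of_add_inv_eq (Circle.coe_ne_zero (toCircle a))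
      (Circle.coe_ne_zero (toCircle b)) (Circle.coe_ne_zero (toCircle u))
      (by linear_combination hz' - hz) with h | h
    · exact Or.inr (Or.inl (coe_toCircle_inj.1 h))
    · exact Or.inr (Or.inr (coe_toCircle_inj.1 (h.trans (coe_toCircle_neg_add a b).symm)))
  · rintro (rfl | rfl | rfl)
    · exact ha
    · exact hb
    · show z ∈ FPline n (-(a + b)).val
      convert add_add_mem_FPline hne (show -(a + b) + a + b = 0 by abel) using 1
      rw [hz]
      ring

lemma linesThrough_sum {s : Finset (ZMod n)} (hs : s ∈ zeroSumTriples (ZMod n)) :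
    linesThrough n (∑ x ∈ s, (toCircle x : ℂ)) = s := by
  obtain ⟨x, hx, y, hy, hxy⟩ := one_lt_card.1 (by rw [(mem_zeroSumTriples.1 hs).1]; norm_num)
  obtain rfl := eq_insert_insert_neg_add hs hx hy hxy
  have hx' : x ∈ linesThrough n (toCircle x + toCircle y + toCircle (-(x + y))) :=
    add_add_mem_FPline hne (by abel)
  have hy' : y ∈ linesThrough n (toCircle x + toCircle y + toCircle (-(x + y))) := by
    rw [mem_linesThrough, add_comm (toCircle x : ℂ)]
    exact add_add_mem_FPline hne (by abel)
  rw [sum_triple _ (mem_zeroSumTriples.1 hs).1, linesThrough_eq hne hxy hx' hy']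
  push_cast
  rfl

lemma exists_sum_eq_of_ncard_linesThrough_eq_three {z : ℂ}
    (h : (linesThrough n z).ncard = 3) :
    ∃ s ∈ zeroSumTriples (ZMod n), ∑ x ∈ s, (toCircle x : ℂ) = z := by
  obtain ⟨a, b, c, hab, -, -, hset⟩ := Set.ncard_eq_three.1 h
  have ha : a ∈ linesThrough n z := by rw [hset]; simp
  have hb : b ∈ linesThrough n z := by rw [hset]; simp
  have hmem : ({a, b, -(a + b)} : Finset (ZMod n)) ∈ zeroSumTriples (ZMod n) := by
    rw [insert_insert_neg_add_mem_zeroSumTriples_iff, ← card_triple_eq_three_iff,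
      ← Set.ncard_coe_finset, ← h, linesThrough_eq hne hab ha hb]
    push_cast
    rfl
  refine ⟨_, hmem, ?_⟩
  rw [sum_triple _ (mem_zeroSumTriples.1 hmem).1]
  exact (eq_of_mem_FPline_of_mem_FPline hne hab ha hb).symm

end

end

/-- **Füredi–Palásti.** For even `n ≥ 6`, the configuration of the `n` real lines
`L_i = L_{i, n/2-2i}`, `i = 0,…,n-1`, has exactly `1 + ⌊n(n-3)/6⌋` triple points, i.e. points
lying on exactly three of the configuration lines. -/
theorem furedi_palasti_triple_point_count (n : ℕ) (hn : 6 ≤ n) (hne : Even n) :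
    {z : ℂ | {i : ℕ | i < n ∧ z ∈ FPline n i}.ncard = 3}.ncard = 1 + n * (n - 3) / 6 := by
  have : NeZero n := ⟨by omega⟩
  have hlines (z : ℂ) : {i : ℕ | i < n ∧ z ∈ FPline n i}.ncard = (linesThrough n z).ncard :=
    ncard_setOf_lt_and _
  have htriple : {z : ℂ | (linesThrough n z).ncard = 3} =
      (fun s => ∑ x ∈ s, (toCircle x : ℂ)) ''
        (zeroSumTriples (ZMod n) : Set (Finset (ZMod n))) := by
    ext z
    constructor
    · exact exists_sum_eq_of_ncard_linesThrough_eq_three hne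
    · rintro ⟨s, hs, rfl⟩
      rw [Set.mem_ofPred_eq, linesThrough_sum hne hs, Set.ncard_coe_finset,
        (mem_zeroSumTriples.1 hs).1]
  have hinj : Set.InjOn (fun s => ∑ x ∈ s, (toCircle x : ℂ))
      (zeroSumTriples (ZMod n) : Set (Finset (ZMod n))) := fun s hs t ht hst =>
    coe_inj.1 <| (linesThrough_sum hne hs).symm.trans <|
      (congrArg (linesThrough n) hst).trans (linesThrough_sum hne ht)
  simp_rw [hlines]
  rw [htriple, hinj.ncard_image, Set.ncard_coe_finset,
    card_zeroSumTriples (by rw [ZMod.card]; omega), ZMod.card]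

end
end
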